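/- cov(M) ≤ 𝔡_⋔ and 𝔡_⋔ ≤ non(N): on Cantor space, the covering number of the meager ideal is at most 𝔡_⋔, which in turn is at most the uniformity of the null ideal. -/

import Mathlib

open Cardinal Set Filter MeasureTheory

/-- The `n`-th block of the fixed interval partition of `ℕ` into consecutive finite
intervals with `|I_n| = 2^(n+1)`: `I n = [2^(n+1) - 2, 2^(n+2) - 2)`. -/
def Iblock (n : ℕ) : Finset ℕ := Finset.Ico (2 ^ (n + 1) - 2) (2 ^ (n + 2) - 2)

/-- `f ⋔ g`: `f ↾ I_k ≠ g ↾ I_k` for all but finitely many `k`. -/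
def Pitch (f g : ℕ → Bool) : Prop :=
  ∀ᶠ k in Filter.atTop, ∃ i ∈ Iblock k, f i ≠ g i

/-- `μ` is the uniform product probability measure on Cantor space `2^ω`
(each coordinate uniform on `{0,1}`), characterized by its values on cylinders. -/
def IsUniformProductMeasure (μ : Measure (ℕ → Bool)) : Prop :=
  IsProbabilityMeasure μ ∧
  ∀ s : Finset ℕ, ∀ g : ℕ → Bool,
    μ { f : ℕ → Bool | ∀ i ∈ s, f i = g i } = (1 / 2 : ENNReal) ^ s.card

/-- `𝔡_⋔`: the least cardinality of a family `D ⊆ 2^ω` such that for every `f ∈ 2^ω`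
some `g ∈ D` satisfies `f ⋔ g`. -/
noncomputable def dPitch : Cardinal :=
  sInf { c | ∃ D : Set (ℕ → Bool), (∀ f : ℕ → Bool, ∃ g ∈ D, Pitch f g) ∧ #D = c }

/-- `cov(M)` on Cantor space: the least cardinality of a family of meager subsets of
`2^ω` whose union covers `2^ω`. -/
noncomputable def covMeagerCantor : Cardinal :=
  sInf { c | ∃ F : Set (Set (ℕ → Bool)), (∀ s ∈ F, IsMeagre s) ∧ ⋃₀ F = Set.univ ∧ #F = c }

/-- `non(N)` on Cantor space: the least cardinality of a subset of `2^ω` that is not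
`μ`-null. -/
noncomputable def nonNullCantor (μ : Measure (ℕ → Bool)) : Cardinal :=
  sInf { c | ∃ S : Set (ℕ → Bool), μ S ≠ 0 ∧ #S = c }

/-!
For fixed `g`, the set `{f | f ⋔ g}` is a countable union of closed sets
`{f | ∀ k ≥ m, f ↾ I_k ≠ g ↾ I_k}`, each nowhere dense because `f` may be copied from `g` on a
block `I_k` beyond any finite set of coordinates; so a family `D` witnessing `𝔡_⋔` yields `|D|`
meagre sets covering `2^ω`. Dually, for fixed `f`, the set `{g | ¬ f ⋔ g}` is null by
Borel–Cantelli, since `μ {g | g ↾ I_k = f ↾ I_k} = 2^(-2^(k+1))` is summable; so a non-null set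
`S` contains, for each `f`, some `g` with `f ⋔ g`.
-/

lemma card_Iblock (k : ℕ) : (Iblock k).card = 2 ^ (k + 1) := by
  have : 2 ≤ 2 ^ (k + 1) := Nat.le_self_pow (by omega) 2
  rw [Iblock, Nat.card_Ico, pow_succ 2 (k + 1)]
  omega

lemma Iblock_nonempty (k : ℕ) : (Iblock k).Nonempty := by
  rw [← Finset.card_pos, card_Iblock]
  positivity

lemma le_of_mem_Iblock {k i : ℕ} (hi : i ∈ Iblock k) : k ≤ i := by
  have : k + 1 < 2 ^ (k + 1) := Nat.lt_two_pow_self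
  rw [Iblock, Finset.mem_Ico] at hi
  omega

lemma pitch_not (f : ℕ → Bool) : Pitch f (fun i => !f i) :=
  Eventually.of_forall fun k =>
    let ⟨i, hi⟩ := Iblock_nonempty k
    ⟨i, hi, by simp⟩

def pitchFrom (m : ℕ) (g : ℕ → Bool) : Set (ℕ → Bool) :=
  {f | ∀ k, m ≤ k → ∃ i ∈ Iblock k, f i ≠ g i}

lemma setOf_pitch_subset_iUnion_pitchFrom (g : ℕ → Bool) :
    {f | Pitch f g} ⊆ ⋃ m, pitchFrom m g := fun _ hf =>
  mem_iUnion.2 (eventually_atTop.1 hf)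

lemma isClosed_pitchFrom (m : ℕ) (g : ℕ → Bool) : IsClosed (pitchFrom m g) := by
  have : pitchFrom m g =
      ⋂ k, ⋂ (_ : m ≤ k), ⋃ i ∈ Iblock k, {f : ℕ → Bool | f i ≠ g i} := by
    ext f; simp [pitchFrom]
  rw [this]
  exact isClosed_iInter fun k => isClosed_iInter fun _ =>
    (Iblock k).finite_toSet.isClosed_biUnion fun i _ =>
      show IsClosed ((fun f : ℕ → Bool => f i) ⁻¹' {g i}ᶜ) from
        (isClosed_discrete _).preimage (continuous_apply i)

lemma interior_pitchFrom (m : ℕ) (g : ℕ → Bool) : interior (pitchFrom m g) = ∅ := by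
  refine eq_empty_iff_forall_notMem.2 fun f hf => ?_
  obtain ⟨I, u, hu, hIu⟩ := isOpen_pi_iff.1 isOpen_interior f hf
  obtain ⟨n, hIn⟩ := I.exists_nat_subset_range
  let k := max m n
  have hI_disjoint : ∀ a ∈ I, a ∉ Iblock k := fun a ha hak => by
    have := Finset.mem_range.1 (hIn ha)
    have := le_of_mem_Iblock hak
    omega
  let f' : ℕ → Bool := fun i => if i ∈ Iblock k then g i else f i
  have hf' : f' ∈ (I : Set ℕ).pi u := fun a ha => by
    simpa only [f', if_neg (hI_disjoint a ha)] using (hu a ha).2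
  obtain ⟨i, hi, hne⟩ := interior_subset (hIu hf') k (le_max_left m n)
  exact hne (if_pos hi)

lemma isMeagre_setOf_pitch (g : ℕ → Bool) : IsMeagre {f | Pitch f g} :=
  (isMeagre_iUnion fun m => ((isClosed_pitchFrom m g).isNowhereDense_iff.2
    (interior_pitchFrom m g)).isMeagre).mono (setOf_pitch_subset_iUnion_pitchFrom g)

lemma setOf_not_pitch_subset_limsup (f : ℕ → Bool) :
    {g | ¬ Pitch f g} ⊆ limsup (fun k => {g | ∀ i ∈ Iblock k, g i = f i}) atTop := by
  intro g hg
  rw [mem_ofPred_eq, Pitch, not_eventually] at hg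
  refine mem_limsup_iff_frequently_mem.2 (hg.mono fun k hk i hi => ?_)
  by_contra hne
  exact hk ⟨i, hi, Ne.symm hne⟩

lemma measure_setOf_not_pitch {μ : Measure (ℕ → Bool)}
    (hcyl : ∀ (s : Finset ℕ) (g : ℕ → Bool),
      μ {f | ∀ i ∈ s, f i = g i} = (1 / 2 : ENNReal) ^ s.card)
    (f : ℕ → Bool) : μ {g | ¬ Pitch f g} = 0 := by
  refine measure_mono_null (setOf_not_pitch_subset_limsup f) (measure_limsup_atTop_eq_zero ?_)
  have hblock_le (k : ℕ) : μ {g | ∀ i ∈ Iblock k, g i = f i} ≤ 2⁻¹ ^ k := by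
    rw [hcyl, card_Iblock, one_div]
    exact pow_le_pow_right_of_le_one' (ENNReal.inv_le_one.2 one_le_two)
      (Nat.lt_two_pow_self.le.trans (Nat.pow_le_pow_right two_pos k.le_succ))
  exact ne_top_of_le_ne_top ENNReal.ofNat_ne_top
    ((ENNReal.tsum_le_tsum hblock_le).trans_eq ENNReal.tsum_geometric_two)

lemma covMeagerCantor_le_dPitch : covMeagerCantor ≤ dPitch := by
  refine le_csInf ⟨_, Set.univ, fun f => ⟨_, mem_univ _, pitch_not f⟩, rfl⟩ ?_
  rintro _ ⟨D, hD, rfl⟩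
  have hmeagre : ∀ s ∈ (fun g => {f | Pitch f g}) '' D, IsMeagre s := by
    rintro _ ⟨g, -, rfl⟩
    exact isMeagre_setOf_pitch g
  have hcover : ⋃₀ ((fun g => {f | Pitch f g}) '' D) = Set.univ := by
    refine eq_univ_of_forall fun f => ?_
    obtain ⟨g, hg, hfg⟩ := hD f
    exact ⟨_, mem_image_of_mem _ hg, hfg⟩
  calc covMeagerCantor ≤ #((fun g => {f | Pitch f g}) '' D) :=
        csInf_le (OrderBot.bddBelow _) ⟨_, hmeagre, hcover, rfl⟩
    _ ≤ #D := mk_image_le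

lemma dPitch_le_nonNullCantor {μ : Measure (ℕ → Bool)} [NeZero μ]
    (hnull : ∀ f, μ {g | ¬ Pitch f g} = 0) : dPitch ≤ nonNullCantor μ := by
  refine le_csInf ⟨_, Set.univ, NeZero.ne (μ Set.univ), rfl⟩ ?_
  rintro _ ⟨S, hS, rfl⟩
  refine csInf_le (OrderBot.bddBelow _) ⟨S, fun f => ?_, rfl⟩
  by_contra! h
  exact hS (measure_mono_null h (hnull f))

/-- `cov(M) ≤ 𝔡_⋔ ≤ non(N)` on Cantor space. -/
theorem covMeager_le_dPitch_le_nonNull (μ : Measure (ℕ → Bool))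
    (hμ : IsUniformProductMeasure μ) :
    covMeagerCantor ≤ dPitch ∧ dPitch ≤ nonNullCantor μ := by
  have : IsProbabilityMeasure μ := hμ.1
  exact ⟨covMeagerCantor_le_dPitch, dPitch_le_nonNullCantor (measure_setOf_not_pitch hμ.2)⟩
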